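/- Every 321-avoiding simsun permutation is double simsun, and the number of 321-avoiding double simsun permutations in S_n equals the Catalan number C_n. -/

import Mathlib

/-- A permutation `σ ∈ S_n` is *simsun* if for every `k`, the subword of `σ`
restricted to the `k` smallest values has no double descent, i.e. no three
consecutive (in that subword) decreasing elements. -/
def Simsun {n : ℕ} (σ : Equiv.Perm (Fin n)) : Prop :=
  ∀ k : ℕ, ¬ ∃ i j l : Fin n, i < j ∧ j < l ∧
    (σ i).val < k ∧ (σ j).val < k ∧ (σ l).val < k ∧
    σ l < σ j ∧ σ j < σ i ∧
    (∀ m : Fin n, i < m → m < j → k ≤ (σ m).val) ∧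
    (∀ m : Fin n, j < m → m < l → k ≤ (σ m).val)

def DoubleSimsun {n : ℕ} (σ : Equiv.Perm (Fin n)) : Prop :=
  Simsun σ ∧ Simsun σ⁻¹

def Avoids123 {n : ℕ} (σ : Equiv.Perm (Fin n)) : Prop :=
  ¬ ∃ i j k : Fin n, i < j ∧ j < k ∧ σ i < σ j ∧ σ j < σ k

def Avoids132 {n : ℕ} (σ : Equiv.Perm (Fin n)) : Prop :=
  ¬ ∃ i j k : Fin n, i < j ∧ j < k ∧ σ i < σ k ∧ σ k < σ j

def Avoids213 {n : ℕ} (σ : Equiv.Perm (Fin n)) : Prop :=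
  ¬ ∃ i j k : Fin n, i < j ∧ j < k ∧ σ j < σ i ∧ σ i < σ k

def Avoids231 {n : ℕ} (σ : Equiv.Perm (Fin n)) : Prop :=
  ¬ ∃ i j k : Fin n, i < j ∧ j < k ∧ σ k < σ i ∧ σ i < σ j

def Avoids312 {n : ℕ} (σ : Equiv.Perm (Fin n)) : Prop :=
  ¬ ∃ i j k : Fin n, i < j ∧ j < k ∧ σ j < σ k ∧ σ k < σ i

def Avoids321 {n : ℕ} (σ : Equiv.Perm (Fin n)) : Prop :=
  ¬ ∃ i j k : Fin n, i < j ∧ j < k ∧ σ k < σ j ∧ σ j < σ i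

/-- An occurrence of the pattern 4132 at positions `i1 < i2 < i3 < i4`. -/
def Pattern4132At {n : ℕ} (σ : Equiv.Perm (Fin n)) (i1 i2 i3 i4 : Fin n) : Prop :=
  i1 < i2 ∧ i2 < i3 ∧ i3 < i4 ∧ σ i2 < σ i4 ∧ σ i4 < σ i3 ∧ σ i3 < σ i1

/-- An occurrence of the pattern 51342 at positions `j1 < j2 < j3 < j4 < j5`. -/
def Pattern51342At {n : ℕ} (σ : Equiv.Perm (Fin n)) (j1 j2 j3 j4 j5 : Fin n) : Prop :=
  j1 < j2 ∧ j2 < j3 ∧ j3 < j4 ∧ j4 < j5 ∧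
  σ j2 < σ j5 ∧ σ j5 < σ j3 ∧ σ j3 < σ j4 ∧ σ j4 < σ j1

/-- `σ` has no occurrence of the pattern 4132. -/
def No4132 {n : ℕ} (σ : Equiv.Perm (Fin n)) : Prop :=
  ¬ ∃ i1 i2 i3 i4 : Fin n, Pattern4132At σ i1 i2 i3 i4

/-- Every occurrence of the pattern 4132 in `σ` is contained in an occurrence
of the pattern 51342 (its four indices are among the five indices). -/
def Every4132In51342 {n : ℕ} (σ : Equiv.Perm (Fin n)) : Prop :=
  ∀ i1 i2 i3 i4 : Fin n, Pattern4132At σ i1 i2 i3 i4 →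
    ∃ j1 j2 j3 j4 j5 : Fin n, Pattern51342At σ j1 j2 j3 j4 j5 ∧
      ({i1, i2, i3, i4} : Set (Fin n)) ⊆ ({j1, j2, j3, j4, j5} : Set (Fin n))

def Contains35142 {n : ℕ} (σ : Equiv.Perm (Fin n)) : Prop :=
  ∃ i1 i2 i3 i4 i5 : Fin n, i1 < i2 ∧ i2 < i3 ∧ i3 < i4 ∧ i4 < i5 ∧
    σ i3 < σ i5 ∧ σ i5 < σ i1 ∧ σ i1 < σ i4 ∧ σ i4 < σ i2

def Contains42513 {n : ℕ} (σ : Equiv.Perm (Fin n)) : Prop :=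
  ∃ i1 i2 i3 i4 i5 : Fin n, i1 < i2 ∧ i2 < i3 ∧ i3 < i4 ∧ i4 < i5 ∧
    σ i4 < σ i2 ∧ σ i2 < σ i5 ∧ σ i5 < σ i1 ∧ σ i1 < σ i3

/-- A Motzkin path encoded as a list of steps `1` (up), `-1` (down), `0` (level):
all prefix sums are nonnegative and the total sum is zero. -/
def MotzkinPath (p : List ℤ) : Prop :=
  (∀ s ∈ p, s = 1 ∨ s = -1 ∨ s = 0) ∧ (∀ t : List ℤ, t <+: p → 0 ≤ t.sum) ∧ p.sum = 0

/-- The path has no two consecutive up steps. -/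
def UUFree (p : List ℤ) : Prop := ¬ ([1, 1] : List ℤ) <:+: p

-- The number of descents of a permutation
open scoped Classical in
noncomputable def numDescents {n : ℕ} (σ : Equiv.Perm (Fin n)) : ℕ :=
  (Finset.univ.filter fun i : Fin n =>
    ∃ h : i.val + 1 < n, σ ⟨i.val + 1, h⟩ < σ i).card

/-- `τ_1 > τ_2 < τ_3 > τ_4 < ⋯` (indices are 0-based here). -/
def Alternating {m : ℕ} (τ : Equiv.Perm (Fin m)) : Prop :=
  ∀ i : Fin m, ∀ h : i.val + 1 < m,
    if i.val % 2 = 0 then τ ⟨i.val + 1, h⟩ < τ i else τ i < τ ⟨i.val + 1, h⟩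


/-!
A permutation is determined by the sequence of its prefix maxima `i ↦ max (σ 0, …, σ i)` as soon
as it avoids 321: at every position that is not a left-to-right maximum it takes the least value
not used before. Conversely, for every weakly increasing `M` with `i ≤ M i`, giving each record of
`M` the value `M r` and filling the remaining positions increasingly with the remaining values
yields a 321-avoider with prefix maxima `M`. Such sequences ("staircases") satisfy the Catalan
recursion, by splitting them at their first fixed point. Finally, a 321-avoider and its inverse
are trivially simsun, so among 321-avoiders the double simsun condition always holds.
-/

-- Staircases vanish from `n` on, so that a staircase is determined by its first `n` values.
structure IsStaircase (n : ℕ) (m : ℕ → ℕ) : Prop where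
  mono : ∀ i j, i ≤ j → j < n → m i ≤ m j
  le_apply : ∀ i < n, i ≤ m i
  apply_lt : ∀ i < n, m i < n
  eq_zero : ∀ i, n ≤ i → m i = 0

def Staircase (n : ℕ) : Type := {m : ℕ → ℕ // IsStaircase n m}

namespace Staircase

section Basic

variable {n : ℕ}

def equivFin : Staircase n ≃ {M : Fin n → Fin n // Monotone M ∧ ∀ i, i ≤ M i} where
  toFun m := ⟨fun i => ⟨m.1 i, m.2.apply_lt i i.2⟩, fun i j hij => m.2.mono i j hij j.2,
    fun i => m.2.le_apply i i.2⟩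
  invFun M := ⟨fun i => if h : i < n then M.1 ⟨i, h⟩ else 0,
    { mono := fun i j hij hj => by
        simpa [hj, hij.trans_lt hj] using
          M.2.1 (show (⟨i, hij.trans_lt hj⟩ : Fin n) ≤ ⟨j, hj⟩ from hij)
      le_apply := fun i hi => by simpa [hi, Fin.le_def] using M.2.2 ⟨i, hi⟩
      apply_lt := fun i hi => by simp [hi]
      eq_zero := fun i hi => dif_neg (by omega) }⟩
  left_inv m := Subtype.ext <| funext fun i => by
    by_cases hi : i < n
    · simp [hi]
    · simp [hi, m.2.eq_zero i (by omega)]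
  right_inv M := by ext; simp

instance : Finite (Staircase n) := Finite.of_equiv _ equivFin.symm

instance : Unique (Staircase 0) where
  default := ⟨fun _ => 0, ⟨by simp, by simp, by simp, by simp⟩⟩
  uniq m := Subtype.ext <| funext fun i => m.2.eq_zero i i.zero_le

end Basic

section FirstFixedPoint

def lower (k : ℕ) (m : ℕ → ℕ) : ℕ → ℕ := fun i => if i < k then m i - 1 else 0

def upper (k l : ℕ) (m : ℕ → ℕ) : ℕ → ℕ := fun j => if j < l then m (k + 1 + j) - (k + 1) else 0

def join (k l : ℕ) (f g : ℕ → ℕ) : ℕ → ℕ := fun i =>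
  if i < k then f i + 1 else if i = k then k else if i ≤ k + l then g (i - (k + 1)) + (k + 1) else 0

variable {n k l : ℕ} {m f g : ℕ → ℕ}

theorem isStaircase_lower (hm : IsStaircase (n + 1) m) (hkn : k ≤ n) (hk : m k = k)
    (hfirst : ∀ i < k, m i ≠ i) : IsStaircase k (lower k m) where
  mono i j hij hj := by
    have := hm.mono i j hij (by omega)
    simp only [lower]; split_ifs <;> omega
  le_apply i hi := by
    have := hm.le_apply i (by omega); have := hfirst i hi
    simp only [lower]; split_ifs; omega
  apply_lt i hi := by
    have := hm.mono i k hi.le (by omega); have := hfirst i hi; have := hm.le_apply i (by omega)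
    simp only [lower]; split_ifs; omega
  eq_zero i hi := by simp only [lower]; split_ifs <;> omega

theorem isStaircase_upper (hm : IsStaircase (n + 1) m) (hkn : k ≤ n) :
    IsStaircase (n - k) (upper k (n - k) m) where
  mono i j hij hj := by
    have := hm.mono (k + 1 + i) (k + 1 + j) (by omega) (by omega)
    simp only [upper]; split_ifs <;> omega
  le_apply i hi := by
    have := hm.le_apply (k + 1 + i) (by omega)
    simp only [upper]; split_ifs; omega
  apply_lt i hi := by
    have := hm.apply_lt (k + 1 + i) (by omega)
    simp only [upper]; split_ifs; omega
  eq_zero i hi := by simp only [upper]; split_ifs <;> omega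

theorem isStaircase_join (hf : IsStaircase k f) (hg : IsStaircase (n - k) g) (hkn : k ≤ n) :
    IsStaircase (n + 1) (join k (n - k) f g) where
  mono i j hij hj := by
    simp only [join]
    split_ifs <;> first
      | omega
      | (have := hf.mono i j hij (by omega); omega)
      | (have := hf.apply_lt i (by omega); omega)
      | (have := hg.mono (i - (k + 1)) (j - (k + 1)) (by omega) (by omega); omega)
  le_apply i hi := by
    simp only [join]
    split_ifs <;> first
      | omega
      | (have := hf.le_apply i (by omega); omega)
      | (have := hg.le_apply (i - (k + 1)) (by omega); omega)
  apply_lt i hi := by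
    simp only [join]
    split_ifs <;> first
      | omega
      | (have := hf.apply_lt i (by omega); omega)
      | (have := hg.apply_lt (i - (k + 1)) (by omega); omega)
  eq_zero i hi := by simp only [join]; split_ifs <;> omega

theorem join_lower_upper (hm : IsStaircase (n + 1) m) (hkn : k ≤ n) (hk : m k = k)
    (hfirst : ∀ i < k, m i ≠ i) : join k (n - k) (lower k m) (upper k (n - k) m) = m := by
  funext i
  have hfix := hfirst i
  have hlo := hm.le_apply i
  have hzero := hm.eq_zero i
  simp only [join, lower, upper]
  split_ifs <;> try omega
  · subst i; exact hk.symm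
  · rw [show k + 1 + (i - (k + 1)) = i by omega]
    omega

theorem lower_join (hf : IsStaircase k f) : lower k (join k l f g) = f := by
  funext i
  have := hf.eq_zero i
  simp only [join, lower]
  split_ifs <;> omega

theorem upper_join (hg : IsStaircase l g) : upper k l (join k l f g) = g := by
  funext i
  have := hg.eq_zero i
  simp only [join, upper, Nat.add_sub_cancel_left]
  split_ifs <;> omega

theorem join_apply_ne_self (hf : IsStaircase k f) {i : ℕ} (hi : i < k) : join k l f g i ≠ i := by
  have := hf.le_apply i hi
  simp only [join, if_pos hi]; omega

theorem exists_apply_eq_self (m : Staircase (n + 1)) : ∃ i, m.1 i = i ∧ i ≤ n :=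
  ⟨n, by have := m.2.le_apply n (by omega); have := m.2.apply_lt n (by omega); omega, le_rfl⟩

noncomputable def firstFixed (m : Staircase (n + 1)) : Fin (n + 1) :=
  ⟨Nat.find m.exists_apply_eq_self, by have := (Nat.find_spec m.exists_apply_eq_self).2; omega⟩

theorem firstFixed_eq_iff (m : Staircase (n + 1)) (k : Fin (n + 1)) :
    m.firstFixed = k ↔ m.1 k = k ∧ ∀ i < (k : ℕ), m.1 i ≠ i := by
  rw [Fin.ext_iff, firstFixed, Nat.find_eq_iff]
  have := k.isLt
  constructor
  · rintro ⟨⟨hk, -⟩, hfirst⟩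
    exact ⟨hk, fun i hi hfix => hfirst i hi ⟨hfix, by omega⟩⟩
  · rintro ⟨hk, hfirst⟩
    exact ⟨⟨hk, by omega⟩, fun i hi hfix => hfirst i hi hfix.1⟩

noncomputable def firstFixedFiberEquiv (k : Fin (n + 1)) :
    {m : Staircase (n + 1) // m.firstFixed = k} ≃ Staircase k × Staircase (n - k) where
  toFun m :=
    have h := (firstFixed_eq_iff _ _).1 m.2
    (⟨lower k m.1.1, isStaircase_lower m.1.2 (by omega) h.1 h.2⟩,
      ⟨upper k (n - k) m.1.1, isStaircase_upper m.1.2 (by omega)⟩)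
  invFun fg := ⟨⟨join k (n - k) fg.1.1 fg.2.1, isStaircase_join fg.1.2 fg.2.2 (by omega)⟩,
    (firstFixed_eq_iff _ _).2 ⟨by simp [join], fun _ hi => join_apply_ne_self fg.1.2 hi⟩⟩
  left_inv m := by
    have h := (firstFixed_eq_iff _ _).1 m.2
    exact Subtype.ext <| Subtype.ext <| join_lower_upper m.1.2 (by omega) h.1 h.2
  right_inv fg := Prod.ext (Subtype.ext (lower_join fg.1.2)) (Subtype.ext (upper_join fg.2.2))

end FirstFixedPoint

theorem card_eq_catalan (n : ℕ) : Nat.card (Staircase n) = catalan n := by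
  induction n using Nat.strong_induction_on with
  | _ n ih =>
  cases n with
  | zero => simp
  | succ n =>
    rw [← Nat.card_congr (Equiv.sigmaFiberEquiv firstFixed), Nat.card_sigma, catalan_succ]
    refine Finset.sum_congr rfl fun k _ => ?_
    rw [Nat.card_congr (firstFixedFiberEquiv k), Nat.card_prod, ih k (by omega),
      ih (n - k) (by omega)]

end Staircase

section PrefixMax

variable {n : ℕ}

def prefixMax (σ : Equiv.Perm (Fin n)) (i : Fin n) : Fin n :=
  (Finset.Iic i).sup' Finset.nonempty_Iic σ

variable {σ τ : Equiv.Perm (Fin n)} {i j : Fin n}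

theorem apply_le_prefixMax (h : j ≤ i) : σ j ≤ prefixMax σ i :=
  Finset.le_sup' σ (Finset.mem_Iic.2 h)

theorem exists_apply_eq_prefixMax (σ : Equiv.Perm (Fin n)) (i : Fin n) :
    ∃ j ≤ i, σ j = prefixMax σ i := by
  obtain ⟨j, hj, hjmax⟩ := Finset.exists_mem_eq_sup' Finset.nonempty_Iic σ
  exact ⟨j, Finset.mem_Iic.1 hj, hjmax.symm⟩

theorem monotone_prefixMax (σ : Equiv.Perm (Fin n)) : Monotone (prefixMax σ) :=
  fun _ _ h => Finset.sup'_mono σ (Finset.Iic_subset_Iic.2 h) Finset.nonempty_Iic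

theorem le_prefixMax_self (σ : Equiv.Perm (Fin n)) (i : Fin n) : i ≤ prefixMax σ i := by
  have := Finset.card_le_card_of_injOn σ (s := Finset.Iic i) (t := Finset.Iic (prefixMax σ i))
    (fun j hj => Finset.mem_Iic.2 <| apply_le_prefixMax (Finset.mem_Iic.1 hj)) σ.injective.injOn
  rw [Fin.card_Iic, Fin.card_Iic] at this
  exact Fin.le_def.2 (by omega)

theorem apply_eq_prefixMax_iff : σ i = prefixMax σ i ↔ ∀ j < i, σ j ≠ prefixMax σ i := by
  constructor
  · intro h j hj hj'
    exact hj.ne (σ.injective (hj'.trans h.symm))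
  · intro h
    obtain ⟨j, hji, hj⟩ := exists_apply_eq_prefixMax σ i
    obtain rfl | hlt := hji.eq_or_lt
    · exact hj
    · exact absurd hj (h j hlt)

theorem Avoids321.apply_le_of_lt_prefixMax (hσ : Avoids321 σ) (h : σ i < prefixMax σ i)
    {v : Fin n} (hv : ∀ j < i, σ j ≠ v) : σ i ≤ v := by
  by_contra! hvi
  obtain ⟨q, hqi, hq⟩ := exists_apply_eq_prefixMax σ i
  have hqi : q < i := hqi.lt_of_ne (by rintro rfl; exact h.ne hq)
  have hiv : i < σ.symm v := by
    rcases lt_trichotomy (σ.symm v) i with hlt | heq | hgt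
    · exact absurd (σ.apply_symm_apply v) (hv _ hlt)
    · exact absurd (by rw [← heq, σ.apply_symm_apply]) hvi.ne'
    · exact hgt
  exact hσ ⟨q, i, σ.symm v, hqi, hiv, by simpa using hvi, hq ▸ h⟩

theorem Avoids321.apply_eq_of_prefixMax_eq (hσ : Avoids321 σ) (hτ : Avoids321 τ)
    (hM : prefixMax σ = prefixMax τ) (hagree : ∀ j < i, σ j = τ j) : σ i = τ i := by
  have hunused (v : Fin n) : (∀ j < i, σ j ≠ v) ↔ (∀ j < i, τ j ≠ v) :=
    forall₂_congr fun j hj => by rw [hagree j hj]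
  have hrecord : σ i = prefixMax σ i ↔ τ i = prefixMax τ i := by
    rw [apply_eq_prefixMax_iff, apply_eq_prefixMax_iff, hM, hunused]
  by_cases h : σ i = prefixMax σ i
  · rw [h, hrecord.1 h, hM]
  have hσi := (apply_le_prefixMax le_rfl).lt_of_ne h
  have hτi := (apply_le_prefixMax le_rfl).lt_of_ne (mt hrecord.2 h)
  exact le_antisymm
    (apply_le_of_lt_prefixMax hσ hσi ((hunused _).2 fun j hj e => hj.ne (τ.injective e)))
    (apply_le_of_lt_prefixMax hτ hτi ((hunused _).1 fun j hj e => hj.ne (σ.injective e)))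

theorem Avoids321.eq_of_prefixMax_eq (hσ : Avoids321 σ) (hτ : Avoids321 τ)
    (hM : prefixMax σ = prefixMax τ) : σ = τ :=
  Equiv.ext fun i => WellFoundedLT.induction i fun _ ih => apply_eq_of_prefixMax_eq hσ hτ hM ih

end PrefixMax

section OfPrefixMax

open scoped Classical

variable {n : ℕ} (M : Fin n → Fin n)

def records : Set (Fin n) := {i | ∀ j < i, M j < M i}

theorem injOn_records : Set.InjOn M (records M) := by
  intro a ha b hb hab
  by_contra hne
  rcases lt_or_gt_of_ne hne with h | h
  · exact (hb a h).ne hab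
  · exact (ha b h).ne' hab

theorem card_nonRecords_eq :
    Fintype.card {i // i ∉ records M} = Fintype.card {v // v ∉ M '' records M} := by
  rw [Fintype.card_subtype_compl, Fintype.card_subtype_compl,
    Fintype.card_congr (Equiv.Set.imageOfInjOn M _ (injOn_records M))]

noncomputable def nonRecordsOrderIso : {i // i ∉ records M} ≃o {v // v ∉ M '' records M} :=
  (Fintype.orderIsoFinOfCardEq _ rfl).symm.trans
    (Fintype.orderIsoFinOfCardEq _ (card_nonRecords_eq M).symm)

-- Records `r` of `M` get the value `M r`; the other positions get the other values increasingly.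
noncomputable def permOfPrefixMax : Equiv.Perm (Fin n) :=
  Equiv.subtypeCongr (Equiv.Set.imageOfInjOn M _ (injOn_records M)) (nonRecordsOrderIso M).toEquiv

variable {M} {i : Fin n}

theorem exists_mem_records_eq (hM : Monotone M) (i : Fin n) :
    ∃ r ∈ records M, r ≤ i ∧ M r = M i := by
  obtain ⟨r, hr, hmin⟩ :=
    (Finset.univ.filter (M · = M i)).exists_min_image id ⟨i, by simp⟩
  simp only [Finset.mem_filter, Finset.mem_univ, true_and, id] at hr hmin
  refine ⟨r, fun j hj => (hM hj.le).lt_of_ne fun h => ?_, hmin i rfl, hr⟩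
  exact (hmin j (h.trans hr)).not_gt hj

theorem permOfPrefixMax_apply_of_mem (h : i ∈ records M) : permOfPrefixMax M i = M i := by
  simp only [permOfPrefixMax, Equiv.subtypeCongr, Equiv.trans_apply, Equiv.sumCongr_apply,
    Equiv.sumCompl_symm_apply_of_pos h, Sum.map_inl, Equiv.sumCompl_apply_inl]
  rfl

theorem permOfPrefixMax_apply_of_notMem (h : i ∉ records M) :
    permOfPrefixMax M i = nonRecordsOrderIso M ⟨i, h⟩ := by
  simp [permOfPrefixMax, Equiv.subtypeCongr, Equiv.sumCompl, h]

theorem strictMonoOn_permOfPrefixMax : StrictMonoOn (permOfPrefixMax M) (records M)ᶜ := by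
  intro i hi j hj hij
  rw [permOfPrefixMax_apply_of_notMem hi, permOfPrefixMax_apply_of_notMem hj]
  exact (nonRecordsOrderIso M).strictMono hij

variable (hM : Monotone M) (hle : ∀ i, i ≤ M i)
include hM hle

theorem permOfPrefixMax_apply_lt (hi : i ∉ records M) : permOfPrefixMax M i < M i := by
  obtain ⟨r, hr, hri, hrM⟩ := exists_mem_records_eq hM i
  have hri : r < i := hri.lt_of_ne (by rintro rfl; exact hi hr)
  have hne : permOfPrefixMax M i ≠ M i := by
    rw [permOfPrefixMax_apply_of_notMem hi, ← hrM]
    exact fun h => (nonRecordsOrderIso M ⟨i, hi⟩).2 (h ▸ ⟨r, hr, rfl⟩)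
  refine lt_of_le_of_ne (not_lt.1 fun hlt => ?_) hne
  -- Otherwise the `n - i` positions `j ≥ i` would all take one of the `n - 1 - M i` values
  -- above `M i`.
  have hmaps : ∀ j ≥ i, M i < permOfPrefixMax M j := by
    intro j hj
    by_cases hjr : j ∈ records M
    · rw [permOfPrefixMax_apply_of_mem hjr, ← hrM]
      exact hjr r (hri.trans_le hj)
    · exact hlt.trans_le (strictMonoOn_permOfPrefixMax.monotoneOn hi hjr hj)
  have := Finset.card_le_card_of_injOn (permOfPrefixMax M) (s := Finset.Ici i)
    (t := Finset.Ioi (M i)) (fun j hj => by simpa using hmaps j (by simpa using hj))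
    (permOfPrefixMax M).injective.injOn
  rw [Fin.card_Ici, Fin.card_Ioi] at this
  have := Fin.le_def.1 (hle i)
  have := (M i).isLt
  omega

theorem permOfPrefixMax_apply_le (i : Fin n) : permOfPrefixMax M i ≤ M i := by
  by_cases hi : i ∈ records M
  · exact (permOfPrefixMax_apply_of_mem hi).le
  · exact (permOfPrefixMax_apply_lt hM hle hi).le

theorem avoids321_permOfPrefixMax : Avoids321 (permOfPrefixMax M) := by
  rintro ⟨i, j, k, hij, hjk, hkj, hji⟩
  have notMem {a b : Fin n} (hab : a < b)
      (hba : permOfPrefixMax M b < permOfPrefixMax M a) : b ∉ records M := fun hb => by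
    rw [permOfPrefixMax_apply_of_mem hb] at hba
    exact hba.not_ge ((permOfPrefixMax_apply_le hM hle a).trans (hM hab.le))
  exact hkj.not_gt (strictMonoOn_permOfPrefixMax (notMem hij hji) (notMem hjk hkj) hjk)

theorem prefixMax_permOfPrefixMax : prefixMax (permOfPrefixMax M) = M := by
  funext i
  apply le_antisymm
  · exact Finset.sup'_le _ _ fun j hj =>
      (permOfPrefixMax_apply_le hM hle j).trans (hM (Finset.mem_Iic.1 hj))
  · obtain ⟨r, hr, hri, hrM⟩ := exists_mem_records_eq hM i
    rw [← hrM, ← permOfPrefixMax_apply_of_mem hr]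
    exact apply_le_prefixMax hri

end OfPrefixMax

section Avoids321

variable {n : ℕ} {σ : Equiv.Perm (Fin n)}

theorem card_avoids321 : Nat.card {σ : Equiv.Perm (Fin n) // Avoids321 σ} = catalan n := by
  rw [← Staircase.card_eq_catalan, Nat.card_congr Staircase.equivFin]
  refine Nat.card_eq_of_bijective
    (fun σ => ⟨prefixMax σ.1, monotone_prefixMax σ.1, le_prefixMax_self σ.1⟩) ⟨?_, ?_⟩
  · exact fun σ τ h => Subtype.ext (Avoids321.eq_of_prefixMax_eq σ.2 τ.2 (congrArg Subtype.val h))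
  · exact fun M => ⟨⟨permOfPrefixMax M.1, avoids321_permOfPrefixMax M.2.1 M.2.2⟩,
      Subtype.ext (prefixMax_permOfPrefixMax M.2.1 M.2.2)⟩

theorem Avoids321.simsun (h : Avoids321 σ) : Simsun σ :=
  fun _ ⟨i, j, l, hij, hjl, _, _, _, hlj, hji, _⟩ => h ⟨i, j, l, hij, hjl, hlj, hji⟩

theorem Avoids321.inv (h : Avoids321 σ) : Avoids321 σ⁻¹ := by
  rintro ⟨i, j, k, hij, hjk, hkj, hji⟩
  exact h ⟨σ⁻¹ k, σ⁻¹ j, σ⁻¹ i, hkj, hji, by simpa using hij, by simpa using hjk⟩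

theorem Avoids321.doubleSimsun (h : Avoids321 σ) : DoubleSimsun σ :=
  ⟨simsun h, simsun (inv h)⟩

end Avoids321

/-- Every 321-avoiding simsun permutation is double simsun, and the number of
321-avoiding double simsun permutations in `S_n` is the Catalan number `C_n`. -/
theorem avoid321_doubleSimsun_catalan (n : ℕ) :
    (∀ σ : Equiv.Perm (Fin n), Avoids321 σ → Simsun σ → DoubleSimsun σ) ∧
    Nat.card {σ : Equiv.Perm (Fin n) // Avoids321 σ ∧ DoubleSimsun σ} = catalan n := by
  refine ⟨fun σ hσ _ => Avoids321.doubleSimsun hσ, ?_⟩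
  rw [← card_avoids321]
  exact Nat.card_congr <|
    Equiv.subtypeEquivRight fun _ => and_iff_left_of_imp Avoids321.doubleSimsun
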